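/- If a measurable function L : (0,∞) → (0,∞) satisfies |1 - L(tr)/L(r)| ≤ C g(r) h_τ(t) for all t ≥ 1 and sufficiently large r (where g(r) → 0 as r → ∞), then for any positive integer k and any δ > 0 there exists C' such that |1 - L^{k/2}(tr)/L^{k/2}(r)| ≤ C' g(r) h_τ(t) t^δ for all t ≥ 1 and sufficiently large r. -/

import Mathlib

/-!
Put `x = L(tr)/L(r)`. The hypothesis says `|x - 1| ≤ C g(r) h_τ(t)`, and once `g(r) ≤ 1` also
`x ≤ 1 + C h_τ(t)`. Factoring `1 - x^k = (1 - x^{k/2})(1 + x^{k/2})` gives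
`|1 - x^{k/2}| ≤ |x^k - 1| ≤ k (1 + C h_τ(t))^{k-1} |x - 1|`, and since
`h_τ(t) ≤ log t ≤ t^ε / ε` for `τ ≤ 0`, the factor `(1 + C h_τ(t))^{k-1}` is `O(t^δ)`.
-/

open Filter Real

/-- `h_τ(t) = ln t` if `τ = 0` and `(t^τ - 1)/τ` otherwise. -/
noncomputable def htau (tau t : ℝ) : ℝ :=
  if tau = 0 then Real.log t else (t ^ tau - 1) / tau

lemma htau_nonneg (tau : ℝ) {t : ℝ} (ht : 1 ≤ t) : 0 ≤ htau tau t := by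
  unfold htau
  split_ifs with h0
  · exact log_nonneg ht
  · rcases lt_or_gt_of_ne h0 with hneg | hpos
    · exact div_nonneg_of_nonpos (by linarith [rpow_le_one_of_one_le_of_nonpos ht hneg.le])
        hneg.le
    · exact div_nonneg (by linarith [one_le_rpow ht hpos.le]) hpos.le

lemma htau_le_log {tau : ℝ} (hτ : tau ≤ 0) {t : ℝ} (ht : 0 < t) : htau tau t ≤ log t := by
  unfold htau
  split_ifs with h0
  · exact le_rfl
  · have hneg : tau < 0 := lt_of_le_of_ne hτ h0
    have hexp : log t * tau + 1 ≤ t ^ tau := by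
      rw [rpow_def_of_pos ht]
      exact add_one_le_exp _
    rw [div_le_iff_of_neg hneg]
    linarith

lemma one_add_mul_htau_le_rpow {tau C ε : ℝ} (hτ : tau ≤ 0) (hC : 0 ≤ C) (hε : 0 < ε)
    {t : ℝ} (ht : 1 ≤ t) : 1 + C * htau tau t ≤ (1 + C / ε) * t ^ ε := by
  have ht0 : 0 < t := by linarith
  have hh : htau tau t ≤ t ^ ε / ε := (htau_le_log hτ ht0).trans (log_le_rpow_div ht0.le hε)
  have htε : 1 ≤ t ^ ε := one_le_rpow ht hε.le
  calc 1 + C * htau tau t ≤ 1 + C * (t ^ ε / ε) := by gcongr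
    _ ≤ t ^ ε + C / ε * t ^ ε := by rw [mul_div_assoc', div_mul_eq_mul_div]; linarith
    _ = (1 + C / ε) * t ^ ε := by ring

lemma exists_one_add_mul_htau_pow_le {tau C δ : ℝ} (hτ : tau ≤ 0) (hC : 0 ≤ C) (hδ : 0 < δ)
    (m : ℕ) : ∃ D, 0 < D ∧ ∀ t, 1 ≤ t → (1 + C * htau tau t) ^ m ≤ D * t ^ δ := by
  set ε := δ / (m + 1)
  have hε : 0 < ε := by positivity
  refine ⟨(1 + C / ε) ^ m, by positivity, fun t ht => ?_⟩
  have hεm : ε * m ≤ δ := by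
    rw [div_mul_eq_mul_div, div_le_iff₀ (by positivity)]
    nlinarith
  calc (1 + C * htau tau t) ^ m
      ≤ ((1 + C / ε) * t ^ ε) ^ m := by
        gcongr
        · have := htau_nonneg tau ht; positivity
        · exact one_add_mul_htau_le_rpow hτ hC hε ht
    _ = (1 + C / ε) ^ m * t ^ (ε * m) := by rw [mul_pow, rpow_mul_natCast (by linarith)]
    _ ≤ (1 + C / ε) ^ m * t ^ δ := by gcongr

lemma abs_one_sub_le_abs_one_sub_sq {a : ℝ} (ha : 0 ≤ a) : |1 - a| ≤ |1 - a ^ 2| := by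
  rw [show 1 - a ^ 2 = (1 - a) * (1 + a) by ring, abs_mul]
  exact le_mul_of_one_le_right (abs_nonneg _) (by rw [abs_of_nonneg (by linarith)]; linarith)

lemma abs_one_sub_rpow_half_le {x M : ℝ} (hx : 0 ≤ x) (hxM : x ≤ M) (hM : 1 ≤ M) (k : ℕ) :
    |1 - x ^ ((k : ℝ) / 2)| ≤ k * M ^ (k - 1) * |x - 1| := by
  have hsq : (x ^ ((k : ℝ) / 2)) ^ 2 = x ^ k := by
    rw [← rpow_mul_natCast hx, ← rpow_natCast]
    norm_num
  calc |1 - x ^ ((k : ℝ) / 2)| ≤ |x ^ k - 1 ^ k| := by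
        rw [one_pow, ← hsq, abs_sub_comm (_ ^ 2)]
        exact abs_one_sub_le_abs_one_sub_sq (rpow_nonneg hx _)
    _ ≤ |x - 1| * k * max |x| |1| ^ (k - 1) := abs_pow_sub_pow_le _ _ _
    _ ≤ |x - 1| * k * M ^ (k - 1) := by
        gcongr
        rw [abs_of_nonneg hx, abs_one]
        exact max_le hxM hM
    _ = k * M ^ (k - 1) * |x - 1| := by ring

theorem slowly_varying_power_remainder_general (L g : ℝ → ℝ) (tau : ℝ) (htau_nonpos : tau ≤ 0)
    (hLpos : ∀ x : ℝ, 0 < x → 0 < L x)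
    (hg0 : Tendsto g atTop (nhds 0))
    (C : ℝ) (hC : 0 < C)
    (hL : ∀ᶠ r : ℝ in atTop, ∀ t : ℝ, 1 ≤ t →
      |1 - L (t * r) / L r| ≤ C * g r * htau tau t) :
    ∀ k : ℕ, 1 ≤ k → ∀ δ : ℝ, 0 < δ → ∃ C' : ℝ, 0 < C' ∧
      ∀ᶠ r : ℝ in atTop, ∀ t : ℝ, 1 ≤ t →
        |1 - (L (t * r)) ^ ((k : ℝ) / 2) / (L r) ^ ((k : ℝ) / 2)|
          ≤ C' * g r * htau tau t * t ^ δ := by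
  intro k hk δ hδ
  obtain ⟨D, hD, hgrowth⟩ := exists_one_add_mul_htau_pow_le htau_nonpos hC.le hδ (k - 1)
  refine ⟨k * C * D, by positivity, ?_⟩
  filter_upwards [hL, eventually_gt_atTop 0, hg0.eventually (gt_mem_nhds one_pos)]
    with r hr hr0 hg1 t ht
  have hLr := hLpos r hr0
  have hLtr := hLpos (t * r) (by positivity)
  have hh := htau_nonneg tau ht
  set x := L (t * r) / L r
  have hx1 : |x - 1| ≤ C * g r * htau tau t := abs_sub_comm x 1 ▸ hr t ht
  have hxM : x ≤ 1 + C * htau tau t := by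
    have : C * g r * htau tau t ≤ C * htau tau t := by
      rw [mul_right_comm]; exact mul_le_of_le_one_right (by positivity) hg1.le
    linarith [le_abs_self (x - 1)]
  rw [← div_rpow hLtr.le hLr.le]
  calc |1 - x ^ ((k : ℝ) / 2)|
      ≤ k * (1 + C * htau tau t) ^ (k - 1) * |x - 1| :=
        abs_one_sub_rpow_half_le (by positivity) hxM (by nlinarith) k
    _ ≤ k * (D * t ^ δ) * (C * g r * htau tau t) := by gcongr; exact hgrowth t ht
    _ = k * C * D * g r * htau tau t * t ^ δ := by ring

/-- If `|1 - L(tr)/L(r)| ≤ C g(r) h_τ(t)` for all `t ≥ 1` and sufficiently large `r`,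
where `g → 0` at infinity and `g` is regularly varying with index `τ ≤ 0`, and `L` is a
locally bounded positive slowly varying function, then for every positive integer `k` and
every `δ > 0` there is `C'` such that
`|1 - L^{k/2}(tr)/L^{k/2}(r)| ≤ C' g(r) h_τ(t) t^δ` for all `t ≥ 1` and sufficiently large `r`. -/
theorem slowly_varying_power_remainder (L g : ℝ → ℝ) (tau : ℝ) (htau_nonpos : tau ≤ 0)
    (hLpos : ∀ x : ℝ, 0 < x → 0 < L x)
    (hLmeas : Measurable L)
    (hLsv : ∀ t : ℝ, 0 < t → Tendsto (fun lam : ℝ => L (lam * t) / L lam) atTop (nhds 1))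
    (hgpos : ∀ x : ℝ, 0 < x → 0 < g x)
    (hgrv : ∀ t : ℝ, 0 < t → Tendsto (fun lam : ℝ => g (lam * t) / g lam) atTop (nhds (t ^ tau)))
    (hg0 : Tendsto g atTop (nhds 0))
    (C : ℝ) (hC : 0 < C)
    (hL : ∀ᶠ r : ℝ in atTop, ∀ t : ℝ, 1 ≤ t →
      |1 - L (t * r) / L r| ≤ C * g r * htau tau t) :
    ∀ k : ℕ, 1 ≤ k → ∀ δ : ℝ, 0 < δ → ∃ C' : ℝ, 0 < C' ∧
      ∀ᶠ r : ℝ in atTop, ∀ t : ℝ, 1 ≤ t →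
        |1 - (L (t * r)) ^ ((k : ℝ) / 2) / (L r) ^ ((k : ℝ) / 2)|
          ≤ C' * g r * htau tau t * t ^ δ :=
  slowly_varying_power_remainder_general L g tau htau_nonpos hLpos hg0 C hC hL
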